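/- arXiv:2410.23913 — 3 statements merged into one kernel-verified Lean document; each statement's English description precedes it below -/
import Mathlib

section
/- Let π, π' ∈ 𝒢 and α, β be outcomes. (i) If α ≽_π β and α ≽_{π'} β then α ≽_{π∘π'} β. (ii) If α ≽_π β and α ≻_{π'} β then α ≻_{π∘π'} β and α ≻_{π'∘π} β. (iii) If α ≡_π β then: α ≽_{π'} β if and only if α ≽_{π∘π'} β, and α ≻_{π'} β if and only if α ≻_{π∘π'} β. -/
namespace LexPref

/-- A pair consisting of a variable and a total order (as a binary relation) on its domain. -/
structure LexPair (ι : Type*) (D : ι → Type*) where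
  var : ι
  ord : D var → D var → Prop
  isLin : IsLinearOrder (D var) ord

/-- An outcome assigns a value to every variable. -/
abbrev Outcome (ι : Type*) (D : ι → Type*) := ∀ i, D i

/-- A lexicographic model: a list of pairs (variable, total order) with pairwise
distinct variables. -/
abbrev LexModel (ι : Type*) (D : ι → Type*) :=
  { l : List (LexPair ι D) // (l.map LexPair.var).Nodup }

variable {ι : Type*} {D : ι → Type*}

/-- The list of variables occurring in a lex model. -/
def vars (π : LexModel ι D) : List ι := π.1.map LexPair.var

/-- The empty lex model. -/
def emptyModel : LexModel ι D := ⟨[], List.nodup_nil⟩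

/-- Composition of lex models: `π` followed by the pairs of `π'` whose variable does
not occur in `π`. -/
def comp [DecidableEq ι] (π π' : LexModel ι D) : LexModel ι D :=
  ⟨π.1 ++ π'.1.filter (fun p => decide (p.var ∉ vars π)), by
    have h1 : (π'.1.filter (fun p => decide (p.var ∉ vars π))).Sublist π'.1 :=
      List.filter_sublist
    rw [List.map_append, List.nodup_append]
    refine ⟨π.2, (h1.map LexPair.var).nodup π'.2, ?_⟩
    intro x hx y hy
    obtain ⟨p, hp, rfl⟩ := List.mem_map.mp hy
    have hd := List.of_mem_filter hp
    simp only [decide_eq_true_eq] at hd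
    rintro rfl
    exact hd hx⟩

/-- `π'` extends `π`: `π' ≠ π` and the sequence `π'` begins with `π`. -/
def Extends (π' π : LexModel ι D) : Prop := π' ≠ π ∧ π.1 <+: π'.1

/-- `π' ⊒ π`: `π'` extends or equals `π`. -/
def ExtendsEq (π' π : LexModel ι D) : Prop := π.1 <+: π'.1

/-- Lexicographic weak preference along a list of pairs. -/
def prefList : List (LexPair ι D) → Outcome ι D → Outcome ι D → Prop
  | [], _, _ => True
  | p :: rest, α, β =>
      (α p.var ≠ β p.var ∧ p.ord (α p.var) (β p.var)) ∨
      (α p.var = β p.var ∧ prefList rest α β)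

/-- Lexicographic strict preference along a list of pairs. -/
def sprefList : List (LexPair ι D) → Outcome ι D → Outcome ι D → Prop
  | [], _, _ => False
  | p :: rest, α, β =>
      (α p.var ≠ β p.var ∧ p.ord (α p.var) (β p.var)) ∨
      (α p.var = β p.var ∧ sprefList rest α β)

/-- `α ≽_π β`. -/
def pref (π : LexModel ι D) (α β : Outcome ι D) : Prop := prefList π.1 α β

/-- `α ≻_π β`. -/
def spref (π : LexModel ι D) (α β : Outcome ι D) : Prop := sprefList π.1 α β

/-- `α ≡_π β`: the outcomes agree on all variables of `π`. -/
def eqOn (π : LexModel ι D) (α β : Outcome ι D) : Prop := ∀ X ∈ vars π, α X = β X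

section Language

variable {L : Type*} (sat : LexModel ι D → L → Prop)

/-- `π ⊨ Γ`. -/
def satSet (π : LexModel ι D) (Γ : Set L) : Prop := ∀ φ ∈ Γ, sat π φ

/-- `Γ` is consistent: some lex model satisfies it. -/
def Consistent (Γ : Set L) : Prop := ∃ π, satSet sat π Γ

/-- `π ⊨* φ`: some `π' ⊒ π` satisfies `φ`. -/
def satStar (π : LexModel ι D) (φ : L) : Prop := ∃ π', ExtendsEq π' π ∧ sat π' φ

/-- `π ⊨* Γ`. -/
def satStarSet (π : LexModel ι D) (Γ : Set L) : Prop := ∀ φ ∈ Γ, satStar sat π φ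

/-- `φ` is compositional. -/
def CompositionalStmt [DecidableEq ι] (φ : L) : Prop :=
  ∀ π π', sat π φ → sat π' φ → sat (comp π π') φ

/-- `Γ` is compositional. -/
def Compositional [DecidableEq ι] (Γ : Set L) : Prop :=
  ∀ φ ∈ Γ, CompositionalStmt sat φ

/-- `φ` is strongly compositional. -/
def StronglyCompositionalStmt [DecidableEq ι] (φ : L) : Prop :=
  ∀ π π', satStar sat π φ → sat π' φ → sat (comp π π') φ

/-- `Γ` is strongly compositional. -/
def StronglyCompositional [DecidableEq ι] (Γ : Set L) : Prop :=
  ∀ φ ∈ Γ, StronglyCompositionalStmt sat φ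

/-- `π` is a maximal model of `Γ`. -/
def MaximalModel (π : LexModel ι D) (Γ : Set L) : Prop :=
  satSet sat π Γ ∧ ∀ π', Extends π' π → ¬ satSet sat π' Γ

/-- `π` is a maximal `⊨*`-model of `Γ`. -/
def MaximalStarModel (π : LexModel ι D) (Γ : Set L) : Prop :=
  satStarSet sat π Γ ∧ ∀ π', Extends π' π → ¬ satStarSet sat π' Γ

end Language

/-- `O_σ(𝒜)`: the optimal elements of `A` with respect to `σ`. -/
def opt (σ : LexModel ι D) (A : Set (Outcome ι D)) : Set (Outcome ι D) :=
  {α ∈ A | ∀ β ∈ A, pref σ α β}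

/-- Iterated optimisation `𝒜_{π₁,…,π_k}`. -/
def iterOpt : List (LexModel ι D) → Set (Outcome ι D) → Set (Outcome ι D)
  | [], A => A
  | σ :: rest, A => iterOpt rest (opt σ A)

end LexPref

/-! A weak preference `α ≽_π β` holds iff either `α ≻_π β` or `α ≡_π β`. Along a concatenation
`l₁ ++ l₂`, both preferences are decided by `l₁` unless `α` and `β` agree on `l₁`, and then by `l₂`.
In `π ∘ π'` the pairs dropped from `π'` have variables of `π`, so in that case `α` and `β` agree
on them as well, and dropping them changes neither preference. -/

namespace LexPref

section

variable {ι : Type*} {D : ι → Type*} {α β : Outcome ι D}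

theorem prefList_iff_sprefList_or_forall_eq {l : List (LexPair ι D)} :
    prefList l α β ↔ sprefList l α β ∨ ∀ p ∈ l, α p.var = β p.var := by
  induction l with
  | nil => simp [prefList, sprefList]
  | cons p rest ih =>
    simp only [prefList, sprefList, ih, List.forall_mem_cons]
    tauto

theorem not_sprefList_of_forall_eq {l : List (LexPair ι D)}
    (h : ∀ p ∈ l, α p.var = β p.var) : ¬ sprefList l α β := by
  induction l with
  | nil => exact id
  | cons p rest ih =>
    rw [List.forall_mem_cons] at h
    rintro (⟨hne, -⟩ | ⟨-, hs⟩)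
    · exact hne h.1
    · exact ih h.2 hs

theorem sprefList_append {l₁ l₂ : List (LexPair ι D)} :
    sprefList (l₁ ++ l₂) α β ↔
      sprefList l₁ α β ∨ (∀ p ∈ l₁, α p.var = β p.var) ∧ sprefList l₂ α β := by
  induction l₁ with
  | nil => simp [sprefList]
  | cons p rest ih =>
    simp only [List.cons_append, sprefList, ih, List.forall_mem_cons]
    tauto

theorem prefList_append {l₁ l₂ : List (LexPair ι D)} :
    prefList (l₁ ++ l₂) α β ↔
      sprefList l₁ α β ∨ (∀ p ∈ l₁, α p.var = β p.var) ∧ prefList l₂ α β := by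
  simp only [prefList_iff_sprefList_or_forall_eq, sprefList_append, List.forall_mem_append]
  tauto

theorem sprefList_filter {l : List (LexPair ι D)} {q : LexPair ι D → Bool}
    (h : ∀ p ∈ l, q p = false → α p.var = β p.var) :
    sprefList (l.filter q) α β ↔ sprefList l α β := by
  induction l with
  | nil => rfl
  | cons p rest ih =>
    rw [List.forall_mem_cons] at h
    cases hq : q p
    · simp [List.filter_cons_of_neg, hq, sprefList, h.1 hq, ih h.2]
    · simp [List.filter_cons_of_pos, hq, sprefList, ih h.2]

theorem prefList_filter {l : List (LexPair ι D)} {q : LexPair ι D → Bool}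
    (h : ∀ p ∈ l, q p = false → α p.var = β p.var) :
    prefList (l.filter q) α β ↔ prefList l α β := by
  have hagree : (∀ p ∈ l.filter q, α p.var = β p.var) ↔ ∀ p ∈ l, α p.var = β p.var := by
    simp only [List.forall_mem_filter]
    exact forall₂_congr fun p hp => ⟨fun h' => (Bool.eq_false_or_eq_true _).elim h' (h p hp),
      fun h' _ => h'⟩
  rw [prefList_iff_sprefList_or_forall_eq, prefList_iff_sprefList_or_forall_eq,
    sprefList_filter h, hagree]

theorem eqOn_iff_forall_eq {π : LexModel ι D} :
    eqOn π α β ↔ ∀ p ∈ π.1, α p.var = β p.var :=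
  List.forall_mem_map

theorem pref_iff_spref_or_eqOn {π : LexModel ι D} :
    pref π α β ↔ spref π α β ∨ eqOn π α β := by
  rw [eqOn_iff_forall_eq]
  exact prefList_iff_sprefList_or_forall_eq

theorem not_spref_of_eqOn {π : LexModel ι D} (h : eqOn π α β) : ¬ spref π α β :=
  not_sprefList_of_forall_eq (eqOn_iff_forall_eq.mp h)

variable [DecidableEq ι]

theorem spref_comp_iff {π π' : LexModel ι D} :
    spref (comp π π') α β ↔ spref π α β ∨ eqOn π α β ∧ spref π' α β := by
  refine sprefList_append.trans (or_congr_right ?_)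
  rw [← eqOn_iff_forall_eq]
  exact and_congr_right fun h => sprefList_filter fun p _ hp => h _ (by simpa using hp)

theorem pref_comp_iff {π π' : LexModel ι D} :
    pref (comp π π') α β ↔ spref π α β ∨ eqOn π α β ∧ pref π' α β := by
  refine prefList_append.trans (or_congr_right ?_)
  rw [← eqOn_iff_forall_eq]
  exact and_congr_right fun h => prefList_filter fun p _ hp => h _ (by simpa using hp)

end

theorem comp_pref_properties_general {ι : Type*} {D : ι → Type*} [DecidableEq ι]
    (π π' : LexModel ι D) (α β : Outcome ι D) :
    (pref π α β → pref π' α β → pref (comp π π') α β) ∧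
    (pref π α β → spref π' α β →
      spref (comp π π') α β ∧ spref (comp π' π) α β) ∧
    (eqOn π α β →
      ((pref π' α β ↔ pref (comp π π') α β) ∧
       (spref π' α β ↔ spref (comp π π') α β))) := by
  refine ⟨fun h h' => ?_, fun h h' => ⟨?_, spref_comp_iff.mpr (Or.inl h')⟩, fun h => ?_⟩
  · rw [pref_comp_iff]
    exact (pref_iff_spref_or_eqOn.mp h).imp id (⟨·, h'⟩)
  · rw [spref_comp_iff]
    exact (pref_iff_spref_or_eqOn.mp h).imp id (⟨·, h'⟩)
  · simp only [pref_comp_iff, spref_comp_iff, not_spref_of_eqOn h, h, false_or, true_and]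

/-- key composition properties of `≽`, `≻` and `≡`. -/
theorem comp_pref_properties {ι : Type*} {D : ι → Type*} [DecidableEq ι]
    [Fintype ι] [∀ i, Fintype (D i)]
    (π π' : LexModel ι D) (α β : Outcome ι D) :
    (pref π α β → pref π' α β → pref (comp π π') α β) ∧
    (pref π α β → spref π' α β →
      spref (comp π π') α β ∧ spref (comp π' π) α β) ∧
    (eqOn π α β →
      ((pref π' α β ↔ pref (comp π π') α β) ∧
       (spref π' α β ↔ spref (comp π π') α β))) :=
  comp_pref_properties_general π π' α β

end LexPref
end

section
/- Let Γ ⊆ ℒ and ψ ∈ ℒ be such that for all π ∈ 𝒢, π ⊨ ψ if and only if π ⊨ Γ. If Γ is compositional then ψ is compositional. If Γ is strongly compositional then ψ is strongly compositional and, for all π ∈ 𝒢, π ⊨* ψ if and only if (π ⊨* Γ and Γ is consistent). -/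
/-! A statement `ψ` with exactly the models of `Γ` is the conjunction of `Γ`, so closure of the
models under composition transfers from the members of `Γ` to `ψ`. For `⊨*`, the witness is
`π ∘ π₀` for any model `π₀` of `Γ`: it extends `π`, and strong compositionality makes it a model
of `Γ` as soon as `π ⊨* Γ`. -/

namespace LexPref

section

variable {ι : Type*} {D : ι → Type*} {L : Type*} {sat : LexModel ι D → L → Prop} {Γ : Set L}
  {π π' : LexModel ι D}

theorem extendsEq_comp [DecidableEq ι] (π π' : LexModel ι D) : ExtendsEq (comp π π') π :=
  List.prefix_append _ _

theorem satStarSet_of_extendsEq (hext : ExtendsEq π' π) (hπ' : satSet sat π' Γ) :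
    satStarSet sat π Γ :=
  fun φ hφ => ⟨π', hext, hπ' φ hφ⟩

theorem Compositional.satSet_comp [DecidableEq ι] (hΓ : Compositional sat Γ)
    (hπ : satSet sat π Γ) (hπ' : satSet sat π' Γ) : satSet sat (comp π π') Γ :=
  fun φ hφ => hΓ φ hφ π π' (hπ φ hφ) (hπ' φ hφ)

theorem StronglyCompositional.satSet_comp [DecidableEq ι] (hΓ : StronglyCompositional sat Γ)
    (hπ : satStarSet sat π Γ) (hπ' : satSet sat π' Γ) : satSet sat (comp π π') Γ :=
  fun φ hφ => hΓ φ hφ π π' (hπ φ hφ) (hπ' φ hφ)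

theorem StronglyCompositional.exists_extendsEq_satSet_iff [DecidableEq ι]
    (hΓ : StronglyCompositional sat Γ) :
    (∃ π', ExtendsEq π' π ∧ satSet sat π' Γ) ↔ satStarSet sat π Γ ∧ Consistent sat Γ := by
  constructor
  · rintro ⟨π', hext, hπ'⟩
    exact ⟨satStarSet_of_extendsEq hext hπ', π', hπ'⟩
  · rintro ⟨hπ, π₀, hπ₀⟩
    exact ⟨comp π π₀, extendsEq_comp π π₀, StronglyCompositional.satSet_comp hΓ hπ hπ₀⟩

end

theorem conjunction_compositional_general {ι : Type*} {D : ι → Type*} [DecidableEq ι]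
    {L : Type*}
    (sat : LexModel ι D → L → Prop) (Γ : Set L) (ψ : L)
    (h : ∀ π, sat π ψ ↔ satSet sat π Γ) :
    (Compositional sat Γ → CompositionalStmt sat ψ) ∧
    (StronglyCompositional sat Γ →
      StronglyCompositionalStmt sat ψ ∧
      ∀ π, (satStar sat π ψ ↔ (satStarSet sat π Γ ∧ Consistent sat Γ))) := by
  refine ⟨fun hΓ π π' hπ hπ' => ?_, fun hΓ => ⟨fun π π' hπ hπ' => ?_, fun π => ?_⟩⟩
  · rw [h] at hπ hπ' ⊢
    exact Compositional.satSet_comp hΓ hπ hπ'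
  · obtain ⟨π'', hext, hπ''⟩ := hπ
    rw [h] at hπ'' hπ' ⊢
    exact StronglyCompositional.satSet_comp hΓ (satStarSet_of_extendsEq hext hπ'') hπ'
  · simp only [satStar, h]
    exact StronglyCompositional.exists_extendsEq_satSet_iff hΓ

/-- if `ψ` is satisfied exactly by the models of `Γ`, then
compositionality (resp. strong compositionality) of `Γ` transfers to `ψ`,
and in the strong case `π ⊨* ψ ↔ (π ⊨* Γ ∧ Γ consistent)`. -/
theorem conjunction_compositional {ι : Type*} {D : ι → Type*} [DecidableEq ι]
    [Fintype ι] [∀ i, Fintype (D i)] {L : Type*}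
    (sat : LexModel ι D → L → Prop) (Γ : Set L) (ψ : L)
    (h : ∀ π, sat π ψ ↔ satSet sat π Γ) :
    (Compositional sat Γ → CompositionalStmt sat ψ) ∧
    (StronglyCompositional sat Γ →
      StronglyCompositionalStmt sat ψ ∧
      ∀ π, (satStar sat π ψ ↔ (satStarSet sat π Γ ∧ Consistent sat Γ))) :=
  conjunction_compositional_general sat Γ ψ h

end LexPref
end

section
/- If φ ∈ ℒ is strongly compositional, then for all π, π' ∈ 𝒢: π ⊨* φ and π' ⊨* φ imply π∘π' ⊨* φ. Consequently, if Γ ⊆ ℒ is strongly compositional then π ⊨* Γ and π' ⊨* Γ imply π∘π' ⊨* Γ. -/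
/-!
Extending the right factor of a composition extends the composition, since the filter in
`comp π ·` preserves prefixes. So if `π' ⊒ π'' ⊨ φ` is a witness for `π' ⊨* φ`, strong
compositionality gives `π ∘ π'' ⊨ φ` with `π ∘ π'' ⊒ π ∘ π'`.
-/

namespace LexPref

section

variable {ι : Type*} {D : ι → Type*} [DecidableEq ι] {L : Type*} (sat : LexModel ι D → L → Prop)

theorem ExtendsEq.comp_left (π : LexModel ι D) {π' π'' : LexModel ι D}
    (h : ExtendsEq π'' π') : ExtendsEq (comp π π'') (comp π π') :=
  (List.prefix_append_right_inj π.1).2 (h.filter _)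

theorem satStar_comp {φ : L} (hφ : StronglyCompositionalStmt sat φ) {π π' : LexModel ι D}
    (hπ : satStar sat π φ) (hπ' : satStar sat π' φ) : satStar sat (comp π π') φ := by
  obtain ⟨π'', hext, hsat⟩ := hπ'
  exact ⟨comp π π'', ExtendsEq.comp_left π hext, hφ π π'' hπ hsat⟩

theorem satStarSet_comp {Γ : Set L} (hΓ : StronglyCompositional sat Γ) {π π' : LexModel ι D}
    (hπ : satStarSet sat π Γ) (hπ' : satStarSet sat π' Γ) : satStarSet sat (comp π π') Γ :=
  fun φ hφ => satStar_comp sat (hΓ φ hφ) (hπ φ hφ) (hπ' φ hφ)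

end

theorem satStar_composition_general {ι : Type*} {D : ι → Type*} [DecidableEq ι]
    {L : Type*}
    (sat : LexModel ι D → L → Prop) :
    (∀ φ : L, StronglyCompositionalStmt sat φ →
      ∀ π π', satStar sat π φ → satStar sat π' φ → satStar sat (comp π π') φ) ∧
    (∀ Γ : Set L, StronglyCompositional sat Γ →
      ∀ π π', satStarSet sat π Γ → satStarSet sat π' Γ →
        satStarSet sat (comp π π') Γ) :=
  ⟨fun _ hφ _ _ => satStar_comp sat hφ, fun _ hΓ _ _ => satStarSet_comp sat hΓ⟩

/-- strong compositionality yields a composition property for `⊨*`,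
both for a single statement and for a set of statements. -/
theorem satStar_composition {ι : Type*} {D : ι → Type*} [DecidableEq ι]
    [Fintype ι] [∀ i, Fintype (D i)] {L : Type*}
    (sat : LexModel ι D → L → Prop) :
    (∀ φ : L, StronglyCompositionalStmt sat φ →
      ∀ π π', satStar sat π φ → satStar sat π' φ → satStar sat (comp π π') φ) ∧
    (∀ Γ : Set L, StronglyCompositional sat Γ →
      ∀ π π', satStarSet sat π Γ → satStarSet sat π' Γ →
        satStarSet sat (comp π π') Γ) :=
  satStar_composition_general sat

end LexPref
end
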